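/- arXiv:math/0606551 — 3 statements merged into one kernel-verified Lean document; each statement's English description precedes it below -/
import Mathlib

section
/- Let K be a relatively compact subset of L^∞(𝕋). Let 𝓔_K be the set of all functions u : 𝕋 × 𝕋 → ℂ of the form u(ζ,w) = Σ_{n=−M}^{M} ζ^n v_n(w) (M ∈ ℕ), where each v_n : 𝕋 → ℂ is essentially bounded and where, for every ζ ∈ 𝕋, the element Σ_{n=−M}^{M} ζ^n 𝐯_n of L^∞(𝕋) (with 𝐯_n the equivalence class of v_n) belongs to K. For δ > 0 define ρ_K(δ) = sup{ ∫_𝕋 |u(w, z₁w) − u(w, z₂w)| dμ(w) : u ∈ 𝓔_K, z₁, z₂ ∈ 𝕋, d(z₁,z₂) ≤ δ }. Then lim_{δ→0} ρ_K(δ) = 0. -/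
open MeasureTheory Complex Filter Set
noncomputable section

instance fact2pi : Fact (0 < 2 * Real.pi) := ⟨Real.two_pi_pos⟩

/-- The circle `𝕋 = ℝ/2πℤ` with arc-length measure `volume` (total mass `2π`); the point
`e^{it} ∈ 𝕋` corresponds to `(t : Tc)`, multiplication of points of `𝕋` corresponds to
addition in `Tc`, `ζ^n` corresponds to `fourier n ζ`, and the arc-length distance `d` is the
distance of the metric of `Tc`. -/
abbrev Tc := AddCircle (2 * Real.pi)

/-- `u ∈ 𝓔_K` : `u(ζ,w) = ∑_{n=-M}^M ζⁿ v_n(w)` with each `v_n` essentially bounded, and for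
every `ζ ∈ 𝕋` the element `∑_{n=-M}^M ζⁿ 𝐯_n` of `L^∞(𝕋)` belongs to `K`. -/
def MemEK (K : Set (Lp ℂ ⊤ (volume : Measure Tc))) (u : Tc → Tc → ℂ) : Prop :=
  ∃ (M : ℕ) (v : ℤ → Tc → ℂ) (hv : ∀ n, MemLp (v n) ⊤ (volume : Measure Tc)),
    (∀ ζ w, u ζ w = ∑ n ∈ Finset.Icc (-(M : ℤ)) M, fourier n ζ * v n w) ∧
    (∀ ζ : Tc,
      (∑ n ∈ Finset.Icc (-(M : ℤ)) M, fourier n ζ • MemLp.toLp (v n) (hv n)) ∈ K)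

/-- `ρ_K(δ)`. -/
noncomputable def rhoK (K : Set (Lp ℂ ⊤ (volume : Measure Tc))) (δ : ℝ) : ℝ :=
  sSup {c : ℝ | ∃ u : Tc → Tc → ℂ, MemEK K u ∧ ∃ z₁ z₂ : Tc, dist z₁ z₂ ≤ δ ∧
    c = ∫ w : Tc, ‖u w (z₁ + w) - u w (z₂ + w)‖}

/-!
For `u ∈ 𝓔_K` the coefficients `v_n` are essentially bounded, so off a single null set the maps
`ζ ↦ u(ζ, x)` are equicontinuous, and by compactness finitely many slices `u(ζ', ·)` approximate
every slice uniformly a.e. Each slice lies in `K`; assigning to each of these finitely many slices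
a point of a finite `ε`-net `T` of `K` gives `f_ζ ∈ T`, independent of `x`, with
`|u(ζ, x) - f_ζ(x)| ≤ 2ε` for a.e. `x` and all `ζ`. Taking `ζ = w` and `x = z₁w, z₂w` bounds the
integral by `8πε + ∑_{f ∈ T} ∫ |f(z₁w) - f(z₂w)| dμ(w)`, and each of these finitely many terms
tends to `0` with `d(z₁, z₂)` by continuity of translation in `L¹`.
-/

open scoped ENNReal Topology

namespace MeasureTheory

theorem Lp.ae_norm_le_norm {α E : Type*} [MeasurableSpace α] {μ : Measure α}
    [NormedAddCommGroup E] (f : Lp E ∞ μ) : ∀ᵐ x ∂μ, ‖f x‖ ≤ ‖f‖ := by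
  filter_upwards [enorm_ae_le_eLpNormEssSup f μ] with x hx
  rw [Lp.norm_def, eLpNorm_exponent_top, ← toReal_enorm]
  exact ENNReal.toReal_mono (eLpNorm_exponent_top (f := f) ▸ (Lp.memLp f).eLpNorm_ne_top) hx

theorem exists_integral_norm_sub_comp_add_lt {G E : Type*} [PseudoMetricSpace G] [AddGroup G]
    [IsTopologicalAddGroup G] [CompactSpace G] [MeasurableSpace G] [BorelSpace G]
    {μ : Measure G} [μ.IsAddLeftInvariant] [IsLocallyFiniteMeasure μ] [NormedAddCommGroup E]
    {f : G → E} (hf : Integrable f μ) {ε : ℝ} (hε : 0 < ε) :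
    ∃ δ > 0, ∀ z₁ z₂ : G, dist z₁ z₂ < δ → ∫ w, ‖f (z₁ + w) - f (z₂ + w)‖ ∂μ < ε := by
  let τ : G → Lp E 1 μ := fun z =>
    Lp.compMeasurePreserving (ContinuousMap.addLeft z) (measurePreserving_add_left μ z) (hf.toL1 f)
  have hτ : Continuous τ := continuous_const.compMeasurePreservingLp
    (ContinuousMap.continuous_of_continuous_uncurry _ continuous_add) _ ENNReal.one_ne_top
  have hτf (z : G) : τ z =ᵐ[μ] fun w => f (z + w) := by
    filter_upwards [Lp.coeFn_compMeasurePreserving (hf.toL1 f) (measurePreserving_add_left μ z),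
      (measurePreserving_add_left μ z).quasiMeasurePreserving.ae (hf.coeFn_toL1)] with w h₁ h₂
    exact h₁.trans h₂
  obtain ⟨δ, hδ, h⟩ :=
    Metric.uniformContinuous_iff.1 (CompactSpace.uniformContinuous_of_continuous hτ) ε hε
  refine ⟨δ, hδ, fun z₁ z₂ hz => ?_⟩
  have hdist : dist (τ z₁) (τ z₂) = ∫ w, ‖f (z₁ + w) - f (z₂ + w)‖ ∂μ := by
    rw [L1.dist_eq_integral_dist]
    refine integral_congr_ae ?_
    filter_upwards [hτf z₁, hτf z₂] with w h₁ h₂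
    rw [h₁, h₂, dist_eq_norm]
  exact hdist ▸ h hz

end MeasureTheory

open MeasureTheory Real

section MemEK

variable {K : Set (Lp ℂ ∞ (volume : Measure Tc))} {u : Tc → Tc → ℂ}

theorem MemEK.exists_mem_ae_eq (hu : MemEK K u) (ζ : Tc) : ∃ g ∈ K, u ζ =ᵐ[volume] g := by
  obtain ⟨M, v, hv, hrep, hmem⟩ := hu
  refine ⟨_, hmem ζ, ?_⟩
  filter_upwards [Lp.coeFn_fun_finsetSum (Finset.Icc (-(M : ℤ)) M)
    fun n => fourier n ζ • (hv n).toLp (v n), (eventually_all_finset _).2 fun n _ =>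
    (Lp.coeFn_smul (fourier n ζ : ℂ) ((hv n).toLp (v n))).and (hv n).coeFn_toLp] with x h₁ h₂
  rw [h₁, hrep]
  refine Finset.sum_congr rfl fun n hn => ?_
  rw [(h₂ n hn).1, Pi.smul_apply, (h₂ n hn).2, smul_eq_mul]

theorem MemEK.exists_modulus (hu : MemEK K u) :
    ∃ c : Tc → Tc → ℝ, (∀ ζ', Continuous fun ζ => c ζ ζ') ∧ (∀ ζ, c ζ ζ = 0) ∧
      ∀ᵐ x, ∀ ζ ζ', ‖u ζ x - u ζ' x‖ ≤ c ζ ζ' := by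
  obtain ⟨M, v, hv, hrep, -⟩ := hu
  refine ⟨fun ζ ζ' => ∑ n ∈ Finset.Icc (-(M : ℤ)) M,
    ‖(fourier n ζ : ℂ) - fourier n ζ'‖ * ‖(hv n).toLp (v n)‖, fun ζ' => by fun_prop,
    by simp, ?_⟩
  filter_upwards [(eventually_all_finset _).2 fun n _ =>
    (Lp.ae_norm_le_norm ((hv n).toLp (v n))).and (hv n).coeFn_toLp] with x hx ζ ζ'
  rw [hrep, hrep, ← Finset.sum_sub_distrib]
  refine (norm_sum_le _ _).trans (Finset.sum_le_sum fun n hn => ?_)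
  rw [← sub_mul, norm_mul, ← (hx n hn).2]
  gcongr
  exact (hx n hn).1

theorem MemEK.exists_finite_ae_approx (hu : MemEK K u) {ε : ℝ} (hε : 0 < ε) :
    ∃ Z : Finset Tc, ∃ σ : Tc → Tc, (∀ ζ, σ ζ ∈ Z) ∧ ∀ᵐ x, ∀ ζ, ‖u ζ x - u (σ ζ) x‖ < ε := by
  obtain ⟨c, hc, hc0, hle⟩ := hu.exists_modulus
  obtain ⟨Z, hZ⟩ := isCompact_univ.elim_finite_subcover (fun ζ' => {ζ | c ζ ζ' < ε})
    (fun ζ' => isOpen_lt (hc ζ') continuous_const)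
    (fun ζ _ => mem_iUnion.2 ⟨ζ, by simp [hc0, hε]⟩)
  choose σ hσZ hσ using fun ζ => by simpa using hZ (mem_univ ζ)
  exact ⟨Z, σ, hσZ, hle.mono fun x hx ζ => (hx ζ (σ ζ)).trans_lt (hσ ζ)⟩

theorem MemEK.exists_ae_approx (hu : MemEK K u) {T : Finset (Lp ℂ ∞ (volume : Measure Tc))}
    {ε : ℝ} (hε : 0 < ε) (hT : K ⊆ ⋃ f ∈ T, Metric.ball f ε) :
    ∃ F : Tc → Lp ℂ ∞ (volume : Measure Tc), (∀ ζ, F ζ ∈ T) ∧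
      ∀ᵐ x, ∀ ζ, ‖u ζ x - F ζ x‖ ≤ 2 * ε := by
  obtain ⟨Z, σ, hσZ, hσ⟩ := hu.exists_finite_ae_approx hε
  have hfiber (ζ : Tc) : ∃ f ∈ T, ∀ᵐ x, ‖u ζ x - f x‖ ≤ ε := by
    obtain ⟨g, hgK, hg⟩ := hu.exists_mem_ae_eq ζ
    obtain ⟨f, hfT, hgf⟩ := mem_iUnion₂.1 (hT hgK)
    refine ⟨f, hfT, ?_⟩
    filter_upwards [hg, Lp.coeFn_sub g f, Lp.ae_norm_le_norm (g - f)] with x h₁ h₂ h₃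
    rw [h₁, ← Pi.sub_apply, ← h₂]
    exact h₃.trans (dist_eq_norm g f ▸ (Metric.mem_ball.1 hgf).le)
  choose f hfT hf using hfiber
  refine ⟨f ∘ σ, fun ζ => hfT _, ?_⟩
  filter_upwards [hσ, (eventually_all_finset Z).2 fun ζ' _ => hf ζ'] with x h₁ h₂ ζ
  calc ‖u ζ x - f (σ ζ) x‖ ≤ ‖u ζ x - u (σ ζ) x‖ + ‖u (σ ζ) x - f (σ ζ) x‖ :=
        norm_sub_le_norm_sub_add_norm_sub _ _ _
    _ ≤ ε + ε := add_le_add (h₁ ζ).le (h₂ _ (hσZ ζ))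
    _ = 2 * ε := by ring

theorem MemEK.integral_norm_sub_le (hu : MemEK K u)
    {T : Finset (Lp ℂ ∞ (volume : Measure Tc))} {ε : ℝ} (hε : 0 < ε)
    (hT : K ⊆ ⋃ f ∈ T, Metric.ball f ε) (z₁ z₂ : Tc) :
    ∫ w, ‖u w (z₁ + w) - u w (z₂ + w)‖ ≤
      4 * ε * (2 * π) + ∑ f ∈ T, ∫ w, ‖f (z₁ + w) - f (z₂ + w)‖ := by
  obtain ⟨F, hFT, hF⟩ := hu.exists_ae_approx hε hT
  have hint (f : Lp ℂ ∞ (volume : Measure Tc)) :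
      Integrable fun w => ‖f (z₁ + w) - f (z₂ + w)‖ :=
    have hf := (Lp.memLp f).integrable le_top
    ((hf.comp_add_left z₁).sub (hf.comp_add_left z₂)).norm
  have hpt : ∀ᵐ w, ‖u w (z₁ + w) - u w (z₂ + w)‖ ≤
      4 * ε + ∑ f ∈ T, ‖f (z₁ + w) - f (z₂ + w)‖ := by
    filter_upwards [(measurePreserving_add_left volume z₁).quasiMeasurePreserving.ae hF,
      (measurePreserving_add_left volume z₂).quasiMeasurePreserving.ae hF] with w h₁ h₂
    calc ‖u w (z₁ + w) - u w (z₂ + w)‖ ≤ ‖u w (z₁ + w) - F w (z₁ + w)‖ +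
          ‖F w (z₁ + w) - F w (z₂ + w)‖ + ‖F w (z₂ + w) - u w (z₂ + w)‖ := by
          simpa only [dist_eq_norm] using
            dist_triangle4 (u w (z₁ + w)) (F w (z₁ + w)) (F w (z₂ + w)) (u w (z₂ + w))
      _ ≤ 2 * ε + ∑ f ∈ T, ‖f (z₁ + w) - f (z₂ + w)‖ + 2 * ε := by
        gcongr
        · exact h₁ w
        · exact Finset.single_le_sum (f := fun f : Lp ℂ ∞ (volume : Measure Tc) =>
            ‖f (z₁ + w) - f (z₂ + w)‖) (fun _ _ => norm_nonneg _) (hFT w)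
        · exact norm_sub_rev (u w (z₂ + w)) _ ▸ h₂ w
      _ = _ := by ring
  calc ∫ w, ‖u w (z₁ + w) - u w (z₂ + w)‖
      ≤ ∫ w, (4 * ε + ∑ f ∈ T, ‖f (z₁ + w) - f (z₂ + w)‖) :=
        integral_mono_of_nonneg (ae_of_all _ fun _ => norm_nonneg _)
          ((integrable_const _).add (integrable_finsetSum _ fun f _ => hint f)) hpt
    _ = _ := by
        rw [integral_add (integrable_const _) (integrable_finsetSum _ fun f _ => hint f),
          integral_const, integral_finsetSum _ fun f _ => hint f, measureReal_def,
          AddCircle.measure_univ, ENNReal.toReal_ofReal two_pi_pos.le, smul_eq_mul]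
        ring

theorem rhoK_nonneg (δ : ℝ) : 0 ≤ rhoK K δ :=
  Real.sSup_nonneg <| by
    rintro _ ⟨u, -, z₁, z₂, -, rfl⟩
    exact integral_nonneg fun _ => norm_nonneg _

theorem rhoK_le {δ C : ℝ} (hC : 0 ≤ C)
    (h : ∀ u, MemEK K u → ∀ z₁ z₂ : Tc, dist z₁ z₂ ≤ δ →
      ∫ w, ‖u w (z₁ + w) - u w (z₂ + w)‖ ≤ C) :
    rhoK K δ ≤ C :=
  Real.sSup_le (by rintro _ ⟨u, hu, z₁, z₂, hz, rfl⟩; exact h u hu z₁ z₂ hz) hC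

end MemEK

/-- If `K` is a relatively compact subset of `L^∞(𝕋)` then
`ρ_K(δ) → 0` as `δ → 0⁺`. -/
theorem stmt1 (K : Set (Lp ℂ ⊤ (volume : Measure Tc))) (hK : IsCompact (closure K)) :
    Tendsto (fun δ : ℝ => rhoK K δ) (nhdsWithin 0 (Set.Ioi 0)) (nhds 0) := by
  refine tendsto_order.2 ⟨fun a ha => .of_forall fun δ => ha.trans_le (rhoK_nonneg δ),
    fun ε hε => ?_⟩
  set ε₁ := ε / (16 * π)
  obtain ⟨T', hT'fin, hT'⟩ := Metric.totallyBounded_iff.1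
    (hK.totallyBounded.subset subset_closure) ε₁ (by positivity)
  obtain ⟨T, rfl⟩ := hT'fin.exists_finset_coe
  set η := ε / (2 * (T.card + 1))
  have hT : ∀ᶠ δ in 𝓝[>] 0, ∀ f ∈ T, ∀ z₁ z₂ : Tc, dist z₁ z₂ ≤ δ →
      ∫ w, ‖f (z₁ + w) - f (z₂ + w)‖ ≤ η := by
    refine (eventually_all_finset T).2 fun f _ => ?_
    obtain ⟨δ₀, hδ₀, h⟩ := exists_integral_norm_sub_comp_add_lt
      ((Lp.memLp f).integrable le_top) (by positivity : 0 < η)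
    filter_upwards [Ioo_mem_nhdsGT hδ₀] with δ hδ z₁ z₂ hz
    exact (h z₁ z₂ (hz.trans_lt hδ.2)).le
  filter_upwards [hT] with δ hδ
  calc rhoK K δ ≤ 4 * ε₁ * (2 * π) + T.card * η :=
        rhoK_le (by positivity) fun u hu z₁ z₂ hz =>
          (hu.integral_norm_sub_le (by positivity) hT' z₁ z₂).trans <| by
            grw [Finset.sum_le_card_nsmul _ _ η fun f hf => hδ f hf z₁ z₂ hz, nsmul_eq_mul]
    _ < ε := by
        simp only [ε₁, η]
        field_simp
        nlinarith [pi_pos]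
end
end

section
/- Let K be a relatively compact subset of L^∞(𝕋). Then for each ε > 0 there exist a number δ > 0 and a measurable set U ⊂ 𝕋 with μ(𝕋 \ U) < ε such that, for each f ∈ K, sup{ |f°(z₁) − f°(z₂)| : z₁, z₂ ∈ U ∩ Ω_f, d(z₁,z₂) < δ } ≤ ε, where f° is the canonical representative of f and Ω_f its set of weak canonical Lebesgue points. -/
open MeasureTheory Complex Filter Set
noncomputable section

/-- `z` is a weak canonical Lebesgue point of `f`: the limit
`lim_{r→0⁺} (1/2r) ∫_{-r}^r f(z e^{it}) dt` exists. -/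
def WeakLebPt (f : Tc → ℂ) (z : Tc) : Prop :=
  ∃ L : ℂ, Tendsto (fun r : ℝ => (1 / (2 * r) : ℝ) • ∫ t in (-r)..r, f (z + (t : Tc)))
    (nhdsWithin 0 (Set.Ioi 0)) (nhds L)

open Classical in
/-- The canonical representative `f°` of `f`: the above limit at weak canonical Lebesgue
points, and `0` elsewhere. -/
noncomputable def canonRep (f : Tc → ℂ) (z : Tc) : ℂ :=
  if h : WeakLebPt f z then h.choose else 0

/-! Cover `K` by finitely many `L^∞`-balls of radius `ε/3` with centres `φ₁, …, φₙ`.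
Approximating each `φᵢ` in `L¹` by a continuous function (Markov's inequality controls where
the approximation is poor) and using the Lebesgue differentiation theorem, one finds `δ` and a
set `U` of almost full measure, consisting of Lebesgue points of every `φᵢ`, on which every `φᵢ`
oscillates by at most `ε/3` at scale `δ`. At such a point `z`, if `z` is also a weak Lebesgue
point of `f`, then `f°(z)` and `φᵢ(z)` are limits of averages over the same balls, so
`‖f°(z) - φᵢ(z)‖ ≤ ‖f - φᵢ‖∞ ≤ ε/3`; the triangle inequality does the rest. -/
open Metric Topology
open scoped ENNReal

lemma MeasureTheory.Lp.ae_norm_sub_le_dist {α E : Type*} [MeasurableSpace α]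
    [NormedAddCommGroup E] {μ : Measure α} (f g : Lp E ∞ μ) :
    ∀ᵐ x ∂μ, ‖f x - g x‖ ≤ dist f g := by
  filter_upwards [ae_le_lpNorm_exponent_top ((Lp.memLp f).sub (Lp.memLp g))] with x hx
  rwa [Lp.dist_def, toReal_eLpNorm ((Lp.aestronglyMeasurable f).sub (Lp.aestronglyMeasurable g))]

section Average

variable {α E : Type*} [MeasurableSpace α] [NormedAddCommGroup E] [NormedSpace ℝ E]
  {μ : Measure α}

lemma norm_average_le_of_ae_norm_le [IsFiniteMeasure μ] {f : α → E} {c : ℝ} (hc : 0 ≤ c)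
    (hf : ∀ᵐ x ∂μ, ‖f x‖ ≤ c) : ‖⨍ x, f x ∂μ‖ ≤ c := by
  rw [average_eq, norm_smul, norm_inv, Real.norm_of_nonneg measureReal_nonneg]
  rcases eq_or_ne (μ.real univ) 0 with h0 | h0
  · simpa [h0] using hc
  · calc (μ.real univ)⁻¹ * ‖∫ x, f x ∂μ‖ ≤ (μ.real univ)⁻¹ * (c * μ.real univ) := by
          gcongr; exact norm_integral_le_of_norm_le_const hf
      _ = c := by field_simp

lemma norm_sub_le_of_tendsto_setAverage [IsFiniteMeasure μ] {ι : Type*} {l : Filter ι}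
    [l.NeBot] {s : ι → Set α} {f g : α → E} {a b : E} {c : ℝ} (hc : 0 ≤ c)
    (hf : Integrable f μ) (hg : Integrable g μ) (hfg : ∀ᵐ x ∂μ, ‖f x - g x‖ ≤ c)
    (ha : Tendsto (fun i ↦ ⨍ x in s i, f x ∂μ) l (𝓝 a))
    (hb : Tendsto (fun i ↦ ⨍ x in s i, g x ∂μ) l (𝓝 b)) : ‖a - b‖ ≤ c := by
  refine le_of_tendsto (ha.sub hb).norm (Eventually.of_forall fun i ↦ ?_)
  have hsub : ⨍ x in s i, f x ∂μ - ⨍ x in s i, g x ∂μ = ⨍ x in s i, (f x - g x) ∂μ := by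
    simp only [setAverage_eq, ← smul_sub, integral_sub hf.integrableOn hg.integrableOn]
  rw [hsub]
  exact norm_average_le_of_ae_norm_le hc (ae_restrict_of_ae hfg)

end Average

section BallAverage

variable {α E : Type*} [PseudoMetricSpace α] [MeasurableSpace α] [NormedAddCommGroup E]
  [NormedSpace ℝ E]

def TendstoBallAverage (μ : Measure α) (f : α → E) (x : α) : Prop :=
  Tendsto (fun r ↦ ⨍ y in closedBall x r, f y ∂μ) (𝓝[>] 0) (𝓝 (f x))

def IsLebesgueUniformOn (μ : Measure α) (f : α → E) (θ δ : ℝ) (U : Set α) : Prop :=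
  (∀ x ∈ U, TendstoBallAverage μ f x) ∧ ∀ x ∈ U, ∀ y ∈ U, dist x y < δ → ‖f x - f y‖ ≤ θ

lemma IsLebesgueUniformOn.mono {μ : Measure α} {f : α → E} {θ δ δ' : ℝ} {U U' : Set α}
    (h : IsLebesgueUniformOn μ f θ δ U) (hδ : δ' ≤ δ) (hU : U' ⊆ U) :
    IsLebesgueUniformOn μ f θ δ' U' :=
  ⟨fun x hx ↦ h.1 x (hU hx),
    fun x hx y hy hxy ↦ h.2 x (hU hx) y (hU hy) (hxy.trans_le hδ)⟩

variable [BorelSpace α] {μ : Measure α}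

lemma ae_tendstoBallAverage [SecondCountableTopology α] [IsLocallyFiniteMeasure μ]
    [IsUnifLocDoublingMeasure μ] [CompleteSpace E] {f : α → E} (hf : LocallyIntegrable f μ) :
    ∀ᵐ x ∂μ, TendstoBallAverage μ f x := by
  filter_upwards [IsUnifLocDoublingMeasure.ae_tendsto_average μ hf 1] with x hx
  refine hx (fun _ ↦ x) id tendsto_id (eventually_mem_nhdsWithin.mono fun r hr ↦ ?_)
  exact mem_closedBall_self (by simpa using hr.le)

lemma MeasureTheory.Integrable.exists_continuous_measure_lt_norm_sub_le
    [SecondCountableTopologyEither α E] [μ.WeaklyRegular] {f : α → E}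
    (hf : Integrable f μ) {θ : ℝ} (hθ : 0 < θ) {η : ℝ≥0∞} (hη : η ≠ 0) :
    ∃ g : α → E, Continuous g ∧ μ {x | θ < ‖f x - g x‖} ≤ η := by
  have hθ' : ENNReal.ofReal θ ≠ 0 := by simpa using hθ
  obtain ⟨g, hg, -⟩ := (memLp_one_iff_integrable.2 hf).exists_boundedContinuous_eLpNorm_sub_le
    ENNReal.one_ne_top (mul_ne_zero hθ' hη)
  have markov := meas_ge_le_mul_pow_eLpNorm_enorm μ one_ne_zero ENNReal.one_ne_top
    (hf.aestronglyMeasurable.sub g.continuous.aestronglyMeasurable) hθ' (by simp)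
  refine ⟨g, g.continuous, ?_⟩
  calc μ {x | θ < ‖f x - g x‖} ≤ μ {x | ENNReal.ofReal θ ≤ ‖(f - ⇑g) x‖ₑ} :=
        measure_mono fun x hx ↦ by
          simpa [← ofReal_norm] using ENNReal.ofReal_le_ofReal (le_of_lt hx)
    _ ≤ (ENNReal.ofReal θ)⁻¹ * eLpNorm (f - ⇑g) 1 μ := by simpa using markov
    _ ≤ (ENNReal.ofReal θ)⁻¹ * (ENNReal.ofReal θ * η) := by gcongr
    _ = η := ENNReal.inv_mul_cancel_left hθ' ENNReal.ofReal_ne_top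

variable [CompactSpace α] [IsFiniteMeasure μ] [IsUnifLocDoublingMeasure μ] [CompleteSpace E]

lemma MeasureTheory.Integrable.exists_isLebesgueUniformOn {f : α → E} (hf : Integrable f μ)
    {θ : ℝ} (hθ : 0 < θ) {η : ℝ≥0∞} (hη : η ≠ 0) :
    ∃ δ > 0, ∃ U, MeasurableSet U ∧ μ Uᶜ ≤ η ∧ IsLebesgueUniformOn μ f θ δ U := by
  obtain ⟨g, hg, hfg⟩ :=
    hf.exists_continuous_measure_lt_norm_sub_le (by positivity : 0 < θ / 3) hη
  obtain ⟨δ, hδ, hgδ⟩ := Metric.uniformContinuous_iff.1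
    (CompactSpace.uniformContinuous_of_continuous hg) (θ / 3) (by positivity)
  set B := {x | ¬ TendstoBallAverage μ f x} ∪ {x | θ / 3 < ‖f x - g x‖}
  have hB : μ B ≤ η := by
    refine (measure_union_le _ _).trans ?_
    rwa [ae_iff.1 (ae_tendstoBallAverage hf.locallyIntegrable), zero_add]
  obtain ⟨T, hBT, hT, hμT⟩ := exists_measurable_superset μ B
  have hgood : ∀ x ∉ T, TendstoBallAverage μ f x ∧ ‖f x - g x‖ ≤ θ / 3 := fun x hx ↦ by
    simpa [B, not_or] using fun h ↦ hx (hBT h)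
  refine ⟨δ, hδ, Tᶜ, hT.compl, by rwa [compl_compl, hμT], fun x hx ↦ (hgood x hx).1,
    fun x hx y hy hxy ↦ ?_⟩
  calc ‖f x - f y‖ ≤ ‖f x - g x‖ + ‖g x - g y‖ + ‖g y - f y‖ := by
        simpa only [dist_eq_norm] using dist_triangle4 (f x) (g x) (g y) (f y)
    _ ≤ θ / 3 + θ / 3 + θ / 3 := by
      gcongr
      · exact (hgood x hx).2
      · exact (dist_eq_norm (g x) (g y) ▸ hgδ hxy).le
      · exact norm_sub_rev (g y) (f y) ▸ (hgood y hy).2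
    _ = θ := by ring

lemma Set.Finite.exists_isLebesgueUniformOn {s : Set (α → E)} (hs : s.Finite)
    (hint : ∀ f ∈ s, Integrable f μ) {θ : ℝ} (hθ : 0 < θ) {η : ℝ≥0∞} (hη : η ≠ 0) :
    ∃ δ > 0, ∃ U, MeasurableSet U ∧ μ Uᶜ ≤ η ∧ ∀ f ∈ s, IsLebesgueUniformOn μ f θ δ U := by
  induction s, hs using Set.Finite.induction_on generalizing η with
  | empty => exact ⟨1, one_pos, univ, MeasurableSet.univ, by simp, by simp⟩
  | @insert f s _ _ ih =>
    have hη2 : η / 2 ≠ 0 := ENNReal.half_pos hη |>.ne'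
    obtain ⟨δ₁, hδ₁, U₁, hU₁, hμU₁, hf⟩ :=
      (hint f (mem_insert f s)).exists_isLebesgueUniformOn hθ hη2
    obtain ⟨δ₂, hδ₂, U₂, hU₂, hμU₂, hs⟩ :=
      ih (fun g hg ↦ hint g (mem_insert_of_mem f hg)) hη2
    refine ⟨min δ₁ δ₂, lt_min hδ₁ hδ₂, U₁ ∩ U₂, hU₁.inter hU₂, ?_, ?_⟩
    · calc μ (U₁ ∩ U₂)ᶜ ≤ μ U₁ᶜ + μ U₂ᶜ := by rw [compl_inter]; exact measure_union_le _ _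
        _ ≤ η / 2 + η / 2 := add_le_add hμU₁ hμU₂
        _ = η := ENNReal.add_halves η
    · rintro g (rfl | hg)
      · exact hf.mono (min_le_left _ _) inter_subset_left
      · exact (hs g hg).mono (min_le_right _ _) inter_subset_right

end BallAverage

namespace Tc

variable {E : Type*} [NormedAddCommGroup E] [NormedSpace ℝ E]

lemma volume_closedBall {r : ℝ} (z : Tc) (hr : r ≤ Real.pi) :
    volume (closedBall z r) = ENNReal.ofReal (2 * r) := by
  rw [AddCircle.volume_closedBall, min_eq_right (by linarith)]

lemma setIntegral_closedBall {r : ℝ} (u : Tc → E) (z : Tc) (h0 : 0 < r) (hr : r < Real.pi) :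
    ∫ y in closedBall z r, u y = ∫ t in (-r)..r, u (z + t) := by
  induction z using QuotientAddGroup.induction_on with | H x =>
  have hπ : |2 * Real.pi| / 2 = Real.pi := by rw [abs_of_pos Real.two_pi_pos]; ring
  have hIoc : Ioc (x - Real.pi) (x + Real.pi) ⊆ closedBall x (|2 * Real.pi| / 2) := by
    rw [hπ, Real.closedBall_eq_Icc]
    exact Ioc_subset_Icc_self
  have hball : ((↑) : ℝ → Tc) ⁻¹' closedBall (x : Tc) r ∩ Ioc (x - Real.pi) (x + Real.pi)
      = Icc (x - r) (x + r) := by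
    rw [AddCircle.coe_real_preimage_closedBall_inter_eq _ _ hIoc, hπ, if_pos hr,
      Real.closedBall_eq_Icc, inter_eq_left]
    exact Icc_subset_Ioc_iff (by linarith) |>.2 ⟨by linarith, by linarith⟩
  calc ∫ y in closedBall (x : Tc) r, u y
      = ∫ a in Ioc (x - Real.pi) (x - Real.pi + 2 * Real.pi),
          (closedBall (x : Tc) r).indicator u a := by
        rw [AddCircle.integral_preimage, integral_indicator measurableSet_closedBall]
    _ = ∫ a in Icc (x - r) (x + r), u a := by
        rw [show x - Real.pi + 2 * Real.pi = x + Real.pi by ring, ← hball, inter_comm,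
          ← setIntegral_indicator (measurableSet_closedBall.preimage AddCircle.measurable_mk')]
        rfl
    _ = ∫ t in (-r)..r, u (x + t) := by
        rw [integral_Icc_eq_integral_Ioc, ← intervalIntegral.integral_of_le (by linarith),
          sub_eq_add_neg, ← intervalIntegral.integral_comp_add_left (fun a : ℝ ↦ u a)]
        simp only [AddCircle.coe_add]

lemma setAverage_closedBall {r : ℝ} (u : Tc → E) (z : Tc) (h0 : 0 < r) (hr : r < Real.pi) :
    ⨍ y in closedBall z r, u y = (1 / (2 * r) : ℝ) • ∫ t in (-r)..r, u (z + t) := by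
  rw [setAverage_eq, measureReal_def, volume_closedBall z hr.le,
    ENNReal.toReal_ofReal (by positivity), setIntegral_closedBall u z h0 hr, one_div]

lemma tendsto_setAverage_canonRep {f : Tc → ℂ} {z : Tc} (hz : WeakLebPt f z) :
    Tendsto (fun r ↦ ⨍ y in closedBall z r, f y) (𝓝[>] 0) (𝓝 (canonRep f z)) := by
  have hlim : Tendsto (fun r : ℝ ↦ (1 / (2 * r) : ℝ) • ∫ t in (-r)..r, f (z + t))
      (𝓝[>] 0) (𝓝 (canonRep f z)) := by
    rw [canonRep, dif_pos hz]
    exact hz.choose_spec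
  refine hlim.congr' ?_
  filter_upwards [Ioo_mem_nhdsGT Real.pi_pos] with r hr
  exact (setAverage_closedBall f z hr.1 hr.2).symm

lemma norm_canonRep_sub_le {f g : Tc → ℂ} {z : Tc} {c : ℝ} (hc : 0 ≤ c)
    (hf : Integrable f) (hg : Integrable g) (hfg : ∀ᵐ x, ‖f x - g x‖ ≤ c)
    (hfz : WeakLebPt f z) (hgz : TendstoBallAverage volume g z) :
    ‖canonRep f z - g z‖ ≤ c :=
  norm_sub_le_of_tendsto_setAverage hc hf hg hfg (tendsto_setAverage_canonRep hfz) hgz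

end Tc

/-- **Statement 2** (Lemma qaa).  Let `K` be a relatively compact subset of `L^∞(𝕋)`.  Then
for each `ε > 0` there are `δ > 0` and a measurable `U ⊆ 𝕋` with `μ(𝕋 \ U) < ε` such that
for each `f ∈ K`, `sup{|f°(z₁) - f°(z₂)| : z₁, z₂ ∈ U ∩ Ω_f, d(z₁,z₂) < δ} ≤ ε`. -/
theorem stmt2 (K : Set (Lp ℂ ⊤ (volume : Measure Tc))) (hK : IsCompact (closure K)) :
    ∀ ε > (0 : ℝ), ∃ δ > (0 : ℝ), ∃ U : Set Tc, MeasurableSet U ∧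
      volume Uᶜ < ENNReal.ofReal ε ∧
      ∀ f ∈ K, ∀ z₁ z₂ : Tc,
        z₁ ∈ U → WeakLebPt (f : Tc → ℂ) z₁ →
        z₂ ∈ U → WeakLebPt (f : Tc → ℂ) z₂ →
        dist z₁ z₂ < δ →
        ‖canonRep (f : Tc → ℂ) z₁ - canonRep (f : Tc → ℂ) z₂‖ ≤ ε := by
  intro ε hε
  have hε3 : 0 < ε / 3 := by positivity
  have hint : ∀ φ : Lp ℂ ∞ (volume : Measure Tc), Integrable φ :=
    fun φ ↦ (Lp.memLp φ).integrable le_top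
  obtain ⟨t, ht, hKt⟩ := totallyBounded_iff.1 (hK.totallyBounded.subset subset_closure) _ hε3
  obtain ⟨δ, hδ, U, hU, hUc, hreg⟩ := (ht.image (⇑)).exists_isLebesgueUniformOn
    (forall_mem_image.2 fun φ _ ↦ hint φ) hε3 (η := ENNReal.ofReal (ε / 2))
    (by simpa using half_pos hε)
  refine ⟨δ, hδ, U, hU, hUc.trans_lt ((ENNReal.ofReal_lt_ofReal_iff hε).2 (half_lt_self hε)),
    fun f hf z₁ z₂ hz₁ hfz₁ hz₂ hfz₂ hz ↦ ?_⟩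
  obtain ⟨φ, hφt, hfφ⟩ := mem_iUnion₂.1 (hKt hf)
  obtain ⟨hleb, hosc⟩ := hreg _ (mem_image_of_mem _ hφt)
  have hnear : ∀ z ∈ U, WeakLebPt f z → ‖canonRep f z - φ z‖ ≤ ε / 3 := fun z hz hfz ↦
    Tc.norm_canonRep_sub_le hε3.le (hint f) (hint φ)
      ((Lp.ae_norm_sub_le_dist f φ).mono fun x hx ↦ hx.trans (mem_ball.1 hfφ).le) hfz (hleb z hz)
  calc ‖canonRep f z₁ - canonRep f z₂‖
      ≤ ‖canonRep f z₁ - φ z₁‖ + ‖φ z₁ - φ z₂‖ + ‖φ z₂ - canonRep f z₂‖ := by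
        simpa only [dist_eq_norm] using
          dist_triangle4 (canonRep f z₁) (φ z₁) (φ z₂) (canonRep f z₂)
    _ ≤ ε / 3 + ε / 3 + ε / 3 := by
        gcongr
        · exact hnear z₁ hz₁ hfz₁
        · exact hosc z₁ hz₁ z₂ hz₂ hz
        · exact norm_sub_rev (φ z₂) _ ▸ hnear z₂ hz₂ hfz₂
    _ = ε := by ring
end
end

section
/- For each θ ∈ (0,1) there is a constant C_θ depending only on θ such that every continuous function f : 𝔸 → ℂ on the closed annulus 𝔸 = {z ∈ ℂ : 1 ≤ |z| ≤ e} which is analytic in the interior of 𝔸 satisfies |f(e^θ)| ≤ C_θ · ( ∫₀^{2π} |f(e^{it})| dt )^{1−θ} · ( ∫₀^{2π} |f(e^{1+it})| dt )^{θ}. -/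
open MeasureTheory Complex Filter Set
noncomputable section

/-- The closed annulus `𝔸 = {z : 1 ≤ |z| ≤ e}`. -/
def Ann : Set ℂ := {z | 1 ≤ ‖z‖ ∧ ‖z‖ ≤ Real.exp 1}

/-- The interior of the annulus, `{z : 1 < |z| < e}`. -/
def AnnInt : Set ℂ := {z | 1 < ‖z‖ ∧ ‖z‖ < Real.exp 1}

/-!
The Cauchy integral formula on an annulus,
`2πi f(z) = ∮_{|w|=e} f(w)/(w-z) dw - ∮_{|w|=1} f(w)/(w-z) dw`,
bounds `2π |f(e^θ)|` by `A·I₁ + B·I₀`, where `I₀`, `I₁` are the `L¹` norms of `f` on the two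
boundary circles. Applied to `z ↦ zⁿ f(z)` for `n ∈ ℤ`, it gives
`e^{nθ} · 2π |f(e^θ)| ≤ A eⁿ I₁ + B I₀`. Taking `n = ⌊log (I₀ / I₁)⌋` balances the two terms and
produces `I₀^{1-θ} I₁^θ` up to a factor `e^θ`; if `I₀` or `I₁` vanishes, letting `n → ∓∞` gives
`f(e^θ) = 0`.
-/

open Metric Topology
open scoped Real

theorem sphere_subset_closedBall_diff_ball {E : Type*} [SeminormedAddCommGroup E] {c : E}
    {r ρ R : ℝ} (hr : r ≤ ρ) (hR : ρ ≤ R) : sphere c ρ ⊆ closedBall c R \ ball c r :=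
  fun _ hw => ⟨sphere_subset_closedBall.trans (closedBall_subset_closedBall hR) hw,
    fun h => (mem_ball.1 h).not_ge (hr.trans (mem_sphere.1 hw).ge)⟩

section CircleIntegral

variable {E : Type*} [NormedAddCommGroup E] [NormedSpace ℂ E]

theorem circleIntegral_sub_inv_eq_zero_of_lt_norm {c z : ℂ} {r : ℝ} (hr0 : 0 ≤ r)
    (hr : r < ‖z - c‖) : (∮ w in C(c, r), (w - z)⁻¹) = 0 := by
  have hne : ∀ w ∈ closedBall c r, w - z ≠ 0 := fun w hw h => by
    rw [mem_closedBall, dist_eq_norm, sub_eq_zero.1 h] at hw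
    exact hw.not_gt hr
  exact circleIntegral_eq_zero_of_differentiable_on_off_countable hr0 countable_empty
    ((continuousOn_id.sub continuousOn_const).inv₀ hne)
    fun w hw => (differentiableAt_id.sub_const z).inv (hne w (ball_subset_closedBall hw.1))

theorem circleIntegral_sub_inv_smul_sub_eq_of_mem_annulus [CompleteSpace E] {c z : ℂ} {r R : ℝ}
    (h0 : 0 < r) (hr : r < ‖z - c‖) (hR : ‖z - c‖ < R) {f : ℂ → E}
    (hc : ContinuousOn f (closedBall c R \ ball c r))
    (hd : DifferentiableOn ℂ f (ball c R \ closedBall c r)) :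
    (∮ w in C(c, R), (w - z)⁻¹ • f w) - (∮ w in C(c, r), (w - z)⁻¹ • f w) =
      (2 * π * I : ℂ) • f z := by
  have hrR : r ≤ R := (hr.trans hR).le
  have hopen : IsOpen (ball c R \ closedBall c r) := isOpen_ball.sdiff isClosed_closedBall
  have hz : z ∈ ball c R \ closedBall c r := by simp [dist_eq_norm, hr, hR]
  have hsub : ball c R \ closedBall c r ⊆ closedBall c R \ ball c r :=
    sdiff_subset_sdiff ball_subset_closedBall ball_subset_closedBall
  -- Cauchy–Goursat for the difference quotient `w ↦ (w - z)⁻¹ • (f w - f z)`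
  have hslope := circleIntegral_eq_of_differentiable_on_annulus_off_countable h0 hrR
    (countable_singleton z)
    ((continuousOn_dslope (mem_of_superset (hopen.mem_nhds hz) hsub)).2
      ⟨hc, hd.differentiableAt (hopen.mem_nhds hz)⟩)
    fun w hw => (differentiableAt_dslope_of_ne hw.2).2
      (hd.differentiableAt (hopen.mem_nhds hw.1))
  have hslope_eq : ∀ ρ, 0 ≤ ρ → ρ ≠ ‖z - c‖ → ContinuousOn f (sphere c ρ) →
      (∮ w in C(c, ρ), dslope f z w) =
      (∮ w in C(c, ρ), (w - z)⁻¹ • f w) - (∮ w in C(c, ρ), (w - z)⁻¹) • f z := by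
    intro ρ hρ hρz hfρ
    have hne : ∀ w ∈ sphere c ρ, w ≠ z := fun w hw h =>
      hρz (by rw [← h, ← mem_sphere_iff_norm.1 hw])
    have hinv : ContinuousOn (fun w => (w - z)⁻¹) (sphere c ρ) :=
      (continuousOn_id.sub continuousOn_const).inv₀ fun w hw => sub_ne_zero.2 (hne w hw)
    rw [circleIntegral.integral_congr hρ fun w hw => by
        rw [dslope_of_ne f (hne w hw), slope_def_module, smul_sub],
      circleIntegral.integral_sub, circleIntegral.integral_smul_const]
    exacts [(hinv.smul hfρ).circleIntegrable hρ,
      (hinv.smul continuousOn_const).circleIntegrable hρ]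
  rw [hslope_eq R (h0.le.trans hrR) hR.ne'
      (hc.mono (sphere_subset_closedBall_diff_ball hrR le_rfl)),
    hslope_eq r h0.le hr.ne (hc.mono (sphere_subset_closedBall_diff_ball le_rfl hrR)),
    circleIntegral.integral_sub_inv_of_mem_ball (by simpa [dist_eq_norm] using hR),
    circleIntegral_sub_inv_eq_zero_of_lt_norm h0.le hr, zero_smul, sub_zero] at hslope
  rw [← sub_eq_zero, ← hslope]; abel

theorem norm_circleIntegral_sub_inv_smul_le {c z : ℂ} {R : ℝ} (hR : 0 ≤ R) (hz : ‖z - c‖ ≠ R)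
    {f : ℂ → E} (hf : ContinuousOn f (sphere c R)) :
    ‖∮ w in C(c, R), (w - z)⁻¹ • f w‖ ≤
      R / |R - ‖z - c‖| * ∫ t in (0)..2 * π, ‖f (circleMap c R t)‖ := by
  rw [circleIntegral, ← intervalIntegral.integral_const_mul]
  refine intervalIntegral.norm_integral_le_of_norm_le Real.two_pi_pos.le
    (Eventually.of_forall fun t _ => ?_) ((hf.circleIntegrable hR).norm.const_mul _)
  have hdist : |R - ‖z - c‖| ≤ ‖circleMap c R t - z‖ := by
    have h := abs_norm_sub_norm_le (circleMap c R t - c) (z - c)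
    rwa [sub_sub_sub_cancel_right, circleMap_sub_center, norm_circleMap_zero,
      abs_of_nonneg hR] at h
  rw [norm_smul, norm_smul, deriv_circleMap, norm_mul, norm_circleMap_zero, norm_I, mul_one,
    abs_of_nonneg hR, norm_inv, div_eq_mul_inv, ← mul_assoc]
  gcongr

theorem two_pi_mul_norm_le_of_mem_annulus [CompleteSpace E] {c z : ℂ} {r R : ℝ} (h0 : 0 < r)
    (hr : r < ‖z - c‖) (hR : ‖z - c‖ < R) {f : ℂ → E}
    (hc : ContinuousOn f (closedBall c R \ ball c r))
    (hd : DifferentiableOn ℂ f (ball c R \ closedBall c r)) :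
    2 * π * ‖f z‖ ≤ R / (R - ‖z - c‖) * (∫ t in (0)..2 * π, ‖f (circleMap c R t)‖) +
      r / (‖z - c‖ - r) * ∫ t in (0)..2 * π, ‖f (circleMap c r t)‖ := by
  have hrR : r ≤ R := (hr.trans hR).le
  calc 2 * π * ‖f z‖ = ‖(2 * π * I : ℂ) • f z‖ := by simp [norm_smul, abs_of_pos Real.pi_pos]
    _ = ‖(∮ w in C(c, R), (w - z)⁻¹ • f w) - ∮ w in C(c, r), (w - z)⁻¹ • f w‖ := by
      rw [circleIntegral_sub_inv_smul_sub_eq_of_mem_annulus h0 hr hR hc hd]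
    _ ≤ ‖∮ w in C(c, R), (w - z)⁻¹ • f w‖ + ‖∮ w in C(c, r), (w - z)⁻¹ • f w‖ :=
      norm_sub_le _ _
    _ ≤ _ := by
      have hRz := norm_circleIntegral_sub_inv_smul_le (z := z) (h0.le.trans hrR) hR.ne
        (hc.mono (sphere_subset_closedBall_diff_ball hrR le_rfl))
      have hrz := norm_circleIntegral_sub_inv_smul_le (z := z) h0.le hr.ne'
        (hc.mono (sphere_subset_closedBall_diff_ball le_rfl hrR))
      rw [abs_of_pos (sub_pos.2 hR)] at hRz
      rw [abs_sub_comm, abs_of_pos (sub_pos.2 hr)] at hrz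
      exact add_le_add hRz hrz

end CircleIntegral

theorem le_zero_of_forall_le_mul_exp_neg {x K c : ℝ} (hc : 0 < c)
    (h : ∀ m : ℕ, x ≤ K * Real.exp (-(m * c))) : x ≤ 0 := by
  have hlim : Tendsto (fun m : ℕ => K * Real.exp (-(m * c))) atTop (𝓝 0) := by
    simpa using (Real.tendsto_exp_neg_atTop_nhds_zero.comp
      (tendsto_natCast_atTop_atTop.atTop_mul_const hc)).const_mul K
  exact ge_of_tendsto' hlim h

theorem le_mul_rpow_mul_rpow_of_forall_int {θ x a b A B : ℝ} (hθ : θ ∈ Ioo 0 1) (ha : 0 ≤ a)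
    (hb : 0 ≤ b) (hA : 0 ≤ A) (hB : 0 ≤ B)
    (h : ∀ n : ℤ, Real.exp (n * θ) * x ≤ A * (Real.exp n * b) + B * a) :
    x ≤ (A + B * Real.exp θ) * a ^ (1 - θ) * b ^ θ := by
  obtain ⟨hθ0, hθ1⟩ := hθ
  have h' : ∀ n : ℤ, x ≤ A * b * Real.exp (n * (1 - θ)) + B * a * Real.exp (-(n * θ)) := fun n =>
    calc x = Real.exp (-(n * θ)) * (Real.exp (n * θ) * x) := by
          rw [← mul_assoc, ← Real.exp_add]; simp
      _ ≤ Real.exp (-(n * θ)) * (A * (Real.exp n * b) + B * a) := by gcongr; exact h n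
      _ = A * b * Real.exp (n * (1 - θ)) + B * a * Real.exp (-(n * θ)) := by
        rw [show (n : ℝ) * (1 - θ) = n + -(n * θ) by ring, Real.exp_add]; ring
  rcases ha.eq_or_lt with rfl | ha
  · rw [Real.zero_rpow (by linarith), mul_zero, zero_mul]
    refine le_zero_of_forall_le_mul_exp_neg (K := A * b) (sub_pos.2 hθ1) fun m => ?_
    simpa [neg_mul] using h' (-m)
  rcases hb.eq_or_lt with rfl | hb
  · rw [Real.zero_rpow hθ0.ne', mul_zero]
    refine le_zero_of_forall_le_mul_exp_neg (K := B * a) hθ0 fun m => ?_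
    simpa using h' m
  obtain ⟨u, rfl⟩ : ∃ u, a = Real.exp u := ⟨Real.log a, (Real.exp_log ha).symm⟩
  obtain ⟨v, rfl⟩ : ∃ v, b = Real.exp v := ⟨Real.log b, (Real.exp_log hb).symm⟩
  -- `e ^ n` is within a factor `e` of `a / b`, which balances the two terms of `h'`
  set n := ⌊u - v⌋
  have hn1 : (n : ℝ) ≤ u - v := Int.floor_le _
  have hn2 : u - v < n + 1 := Int.lt_floor_add_one _
  have hb_term :
      Real.exp v * Real.exp (n * (1 - θ)) ≤ Real.exp (u * (1 - θ)) * Real.exp (v * θ) := by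
    rw [← Real.exp_add, ← Real.exp_add, Real.exp_le_exp]; nlinarith
  have ha_term : Real.exp u * Real.exp (-(n * θ)) ≤
      Real.exp θ * (Real.exp (u * (1 - θ)) * Real.exp (v * θ)) := by
    rw [← Real.exp_add, ← Real.exp_add, ← Real.exp_add, Real.exp_le_exp]; nlinarith
  rw [← Real.exp_mul, ← Real.exp_mul]
  calc x ≤ A * (Real.exp v * Real.exp (n * (1 - θ))) + B * (Real.exp u * Real.exp (-(n * θ))) := by
        simpa only [mul_assoc] using h' n
    _ ≤ A * (Real.exp (u * (1 - θ)) * Real.exp (v * θ)) +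
          B * (Real.exp θ * (Real.exp (u * (1 - θ)) * Real.exp (v * θ))) := by
        gcongr
    _ = (A + B * Real.exp θ) * Real.exp (u * (1 - θ)) * Real.exp (v * θ) := by ring

theorem closedBall_diff_ball_eq_Ann : closedBall (0 : ℂ) (Real.exp 1) \ ball 0 1 = Ann := by
  ext z
  simp [Ann, and_comm]

theorem ball_diff_closedBall_eq_AnnInt : ball (0 : ℂ) (Real.exp 1) \ closedBall 0 1 = AnnInt := by
  ext z
  simp [AnnInt, and_comm]

theorem exp_int_mul_two_pi_mul_norm_le {θ : ℝ} (hθ : θ ∈ Ioo 0 1) {f : ℂ → ℂ}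
    (hc : ContinuousOn f Ann) (hd : DifferentiableOn ℂ f AnnInt) (n : ℤ) :
    Real.exp (n * θ) * (2 * π * ‖f (Real.exp θ)‖) ≤
      Real.exp 1 / (Real.exp 1 - Real.exp θ) *
          (Real.exp n * ∫ t in (0)..2 * π, ‖f (circleMap 0 (Real.exp 1) t)‖) +
        1 / (Real.exp θ - 1) * ∫ t in (0)..2 * π, ‖f (circleMap 0 1 t)‖ := by
  have hz : ‖((Real.exp θ : ℝ) : ℂ) - 0‖ = Real.exp θ := by simp
  have hne : ∀ w ∈ Ann, w ≠ 0 := fun w hw h => by norm_num [Ann, h] at hw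
  have key := two_pi_mul_norm_le_of_mem_annulus (c := 0) (z := (Real.exp θ : ℂ))
    (f := fun w => w ^ n * f w) one_pos
    (by rw [hz]; exact Real.one_lt_exp_iff.2 hθ.1) (by rw [hz]; exact Real.exp_lt_exp.2 hθ.2)
    (by rw [closedBall_diff_ball_eq_Ann]
        exact (continuousOn_id.zpow₀ n fun w hw => Or.inl (hne w hw)).mul hc)
    (by rw [ball_diff_closedBall_eq_AnnInt]
        exact (differentiableOn_id.zpow (Or.inl fun w hw => hne w ⟨hw.1.le, hw.2.le⟩)).mul hd)
  have hpow : ∀ x : ℝ, Real.exp x ^ n = Real.exp (n * x) := fun x => by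
    rw [← Real.rpow_intCast, ← Real.exp_mul, mul_comm]
  simp only [norm_mul, norm_zpow, norm_circleMap_zero, norm_real, Real.norm_eq_abs, abs_one,
    one_zpow, one_mul, abs_of_pos (Real.exp_pos _), hpow, mul_one,
    intervalIntegral.integral_const_mul, hz] at key
  linarith

/-- **Statement 10.**  For each `θ ∈ (0,1)` there is a constant `C_θ` depending only on `θ`
such that every continuous function `f : 𝔸 → ℂ`, analytic in the interior of `𝔸`, satisfies
`|f(e^θ)| ≤ C_θ (∫₀^{2π} |f(e^{it})| dt)^{1-θ} (∫₀^{2π} |f(e^{1+it})| dt)^{θ}`. -/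
theorem stmt10 :
    ∀ θ ∈ Set.Ioo (0 : ℝ) 1, ∃ C : ℝ, ∀ f : ℂ → ℂ,
      ContinuousOn f Ann → DifferentiableOn ℂ f AnnInt →
      ‖f (Real.exp θ)‖ ≤
        C * (∫ t in (0:ℝ)..(2 * Real.pi),
              ‖f (Complex.exp (t * Complex.I))‖) ^ (1 - θ)
          * (∫ t in (0:ℝ)..(2 * Real.pi),
              ‖f (Complex.exp (1 + t * Complex.I))‖) ^ θ := by
  rintro θ hθ
  refine ⟨(Real.exp 1 / (Real.exp 1 - Real.exp θ) + 1 / (Real.exp θ - 1) * Real.exp θ) / (2 * π),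
    fun f hc hd => ?_⟩
  have hinner : ∀ t : ℝ, Complex.exp (t * I) = circleMap 0 1 t := by simp [circleMap]
  have houter : ∀ t : ℝ, Complex.exp (1 + t * I) = circleMap 0 (Real.exp 1) t := by
    simp [circleMap, Complex.exp_add]
  simp only [hinner, houter]
  have hθe : Real.exp θ < Real.exp 1 := Real.exp_lt_exp.2 hθ.2
  have h1θ : 1 < Real.exp θ := Real.one_lt_exp_iff.2 hθ.1
  have key := le_mul_rpow_mul_rpow_of_forall_int hθ
    (intervalIntegral.integral_nonneg Real.two_pi_pos.le fun _ _ => norm_nonneg _)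
    (intervalIntegral.integral_nonneg Real.two_pi_pos.le fun _ _ => norm_nonneg _)
    (div_nonneg (Real.exp_pos 1).le (sub_pos.2 hθe).le)
    (div_nonneg zero_le_one (sub_pos.2 h1θ).le)
    (exp_int_mul_two_pi_mul_norm_le hθ hc hd)
  rw [div_mul_eq_mul_div, div_mul_eq_mul_div, le_div_iff₀ Real.two_pi_pos]
  linarith
end
end
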